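/- Let G = (V,E) be a graph with V = {v_1, …, v_n}, n ≥ 2, let (X, Y, d) be the associated MCC instance, and let α ≥ log₂ n. Then the minimum, over all finite collections of balls centered at points of Y with nonnegative real radii whose union contains X, of the cost Σ r^α, exists and equals the domination number of G (the minimum size of a dominating set of G). -/
import Mathlib


open scoped Classical

/-- The distance function of the MCC instance associated to a graph `G`:
clients `x_i = Sum.inl i`, servers `y_j = Sum.inr j`. -/
noncomputable def mccDist (n : ℕ) (G : SimpleGraph (Fin n)) :
    (Fin n ⊕ Fin n) → (Fin n ⊕ Fin n) → ℝ
  | Sum.inl i, Sum.inl j => if i = j then 0 else 2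
  | Sum.inr i, Sum.inr j => if i = j then 0 else 2
  | Sum.inl i, Sum.inr j => if i = j ∨ G.Adj i j then 1 else 3
  | Sum.inr j, Sum.inl i => if i = j ∨ G.Adj i j then 1 else 3

/-- Let `G` be a graph on `n ≥ 2` vertices and let `α ≥ log₂ n`.  Then the
minimum, over all finite collections of balls centered at servers with
nonnegative radii whose union contains the client set `X`, of the cost
`Σ r^α`, exists and equals the domination number `γ` of `G` (given here as the
least cardinality of a dominating set). -/
theorem mcc_optimum_eq_domination_number (n : ℕ) (hn : 2 ≤ n)
    (G : SimpleGraph (Fin n)) (α : ℝ) (hα : Real.logb 2 (n : ℝ) ≤ α)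
    (γ : ℕ)
    (hγ : IsLeast {k : ℕ | ∃ J : Finset (Fin n),
        (∀ v : Fin n, v ∉ J → ∃ u ∈ J, G.Adj v u) ∧ J.card = k} γ) :
    IsLeast {c : ℝ | ∃ O : Finset (Fin n × ℝ),
        (∀ br ∈ O, 0 ≤ br.2) ∧
        (∀ i : Fin n, ∃ br ∈ O, mccDist n G (Sum.inl i) (Sum.inr br.1) ≤ br.2) ∧
        c = ∑ br ∈ O, br.2 ^ α}
      (γ : ℝ) := by
  obtain ⟨⟨J, hJdom, hJcard⟩, hγlb⟩ := hγ
  have hα1 : (1:ℝ) ≤ α := by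
    calc (1:ℝ) = Real.logb 2 2 := (Real.logb_self_eq_one (by norm_num)).symm
    _ ≤ Real.logb 2 n := Real.logb_le_logb_of_le (by norm_num) (by norm_num) (by exact_mod_cast hn)
    _ ≤ α := hα
  have hα0 : (0:ℝ) ≤ α := by linarith
  constructor
  · -- membership : cost γ is achievable
    refine ⟨J.image (fun j => (j, (1:ℝ))), ?_, ?_, ?_⟩
    · intro br hbr
      simp only [Finset.mem_image] at hbr
      obtain ⟨j, _, rfl⟩ := hbr; norm_num
    · intro i
      by_cases hi : i ∈ J
      · exact ⟨(i, 1), Finset.mem_image_of_mem _ hi, by simp [mccDist]⟩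
      · obtain ⟨u, hu, hadj⟩ := hJdom i hi
        exact ⟨(u, 1), Finset.mem_image_of_mem _ hu, by simp [mccDist, hadj]⟩
    · rw [Finset.sum_image (fun a _ b _ h => (Prod.ext_iff.1 h).1)]
      simp [Real.one_rpow, hJcard]
  · -- lower bound
    rintro c ⟨O, hOnn, hOcov, rfl⟩
    have hγn : (γ:ℝ) ≤ n := by
      have : γ ≤ n := hγlb ⟨Finset.univ,
        fun v hv => absurd (Finset.mem_univ v) hv, by simp⟩
      exact_mod_cast this
    by_cases hbig : ∃ br ∈ O, (3:ℝ) ≤ br.2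
    · obtain ⟨br, hbr, h3⟩ := hbig
      have hn2 : (n:ℝ) ≤ 2 ^ α := by
        have hnpos : (0:ℝ) < n := by positivity
        calc (n:ℝ) = 2 ^ Real.logb 2 (n:ℝ) :=
              (Real.rpow_logb (by norm_num) (by norm_num) hnpos).symm
          _ ≤ 2 ^ α := Real.rpow_le_rpow_of_exponent_le one_le_two hα
      have h2r : (2:ℝ) ^ α ≤ br.2 ^ α :=
        Real.rpow_le_rpow (by norm_num) (by linarith) hα0
      have hsum : br.2 ^ α ≤ ∑ b ∈ O, b.2 ^ α :=
        Finset.single_le_sum (fun b hb => Real.rpow_nonneg (hOnn b hb) α) hbr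
      linarith
    · push_neg at hbig
      set O1 := O.filter (fun br => (1:ℝ) ≤ br.2) with hO1
      set J' := O1.image Prod.fst with hJ'
      have hdom : ∀ i : Fin n, ∃ j ∈ J', i = j ∨ G.Adj i j := by
        intro i
        obtain ⟨br, hbr, hd⟩ := hOcov i
        have hlt := hbig br hbr
        by_cases hc : i = br.1 ∨ G.Adj i br.1
        · refine ⟨br.1, Finset.mem_image_of_mem _ (Finset.mem_filter.2 ⟨hbr, ?_⟩), hc⟩
          simpa [mccDist, hc] using hd
        · exfalso
          simp only [mccDist, if_neg hc] at hd
          linarith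
      have hγJ' : (γ:ℝ) ≤ J'.card := by
        have : γ ≤ J'.card := by
          refine hγlb ⟨J', ?_, rfl⟩
          intro v hv
          obtain ⟨j, hj, hcase⟩ := hdom v
          rcases hcase with rfl | hadj
          · exact absurd hj hv
          · exact ⟨j, hj, hadj⟩
        exact_mod_cast this
      have hcard : (J'.card : ℝ) ≤ (O1.card : ℝ) := by
        exact_mod_cast Finset.card_image_le
      have hstep : (O1.card : ℝ) ≤ ∑ b ∈ O1, b.2 ^ α := by
        have : (O1.card : ℝ) = ∑ _b ∈ O1, (1:ℝ) := by simp
        rw [this]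
        refine Finset.sum_le_sum ?_
        intro b hb
        have hb1 : (1:ℝ) ≤ b.2 := (Finset.mem_filter.1 hb).2
        calc (1:ℝ) = 1 ^ α := (Real.one_rpow α).symm
          _ ≤ b.2 ^ α := Real.rpow_le_rpow (by norm_num) hb1 hα0
      have hsub : ∑ b ∈ O1, b.2 ^ α ≤ ∑ b ∈ O, b.2 ^ α :=
        Finset.sum_le_sum_of_subset_of_nonneg (Finset.filter_subset _ _)
          (fun b hb _ => Real.rpow_nonneg (hOnn b hb) α)
      linarith
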